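/- Let A > 0, δ ∈ (0, π/2), and let α : D⁻_{A,δ} → ℂ² be continuous, analytic on the interior of D⁻_{A,δ}, and satisfy F₀(α(τ)) = α(τ+1) for every τ with τ, τ+1 ∈ D⁻_{A,δ}. Then there exists a unique analytic map α̃ : ℂ ∖ [0,∞) → ℂ² such that α̃ agrees with α on the interior of D⁻_{A,δ} and F₀(α̃(τ)) = α̃(τ+1) for every τ with τ, τ+1 ∈ ℂ ∖ [0,∞). -/

import Mathlib

/-! The translates `τ - n` (`n : ℕ`) of a point of `D⁻_{A,δ}` stay in `D⁻_{A,δ}`, since its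
complement is a sector of half-angle `δ < π/2` at `-A`, which is closed under `z ↦ z + 1`; and
`D⁻_{A,δ}` contains the half-plane `re z < -A`. Hence `α̃ τ := F₀^[n] (α (τ - n))`, for any `n`
putting `τ - n` into that half-plane, does not depend on `n` by the functional equation, is entire,
extends `α` and satisfies `F₀ ∘ α̃ = α̃ ∘ (· + 1)`. Uniqueness is the identity theorem on the
connected slit plane. -/

noncomputable section

/-- The polynomial map `F₀` on `ℂ²`. -/
def F0c : ℂ × ℂ → ℂ × ℂ := fun p =>
  (p.1 + p.2 + 2 * p.1 ^ 2 - 2 * p.1 * p.2 - p.2 ^ 2 / 2 - 8 * p.1 ^ 3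
      - 4 * p.1 ^ 2 * p.2 - 8 * p.1 ^ 4,
   p.2 - 4 * p.1 * p.2 - p.2 ^ 2 - 16 * p.1 ^ 3 - 8 * p.1 ^ 2 * p.2 - 16 * p.1 ^ 4)

/-- `D⁻_{A,δ} = {z ∈ ℂ : z ≠ -A and |arg(z+A)| ≥ δ}` (principal argument). -/
def Dminus (A δ : ℝ) : Set ℂ :=
  {z : ℂ | z ≠ -(A : ℂ) ∧ δ ≤ |Complex.arg (z + A)|}

/-- The slit plane `ℂ ∖ [0,∞)`. -/
def slitC : Set ℂ := {z : ℂ | z.im ≠ 0 ∨ z.re < 0}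

open Complex Set

lemma neg_preimage_slitPlane : Neg.neg ⁻¹' slitPlane = slitC := by
  ext z
  simp [slitC, mem_slitPlane_iff, or_comm]

lemma isOpen_slitC : IsOpen slitC :=
  neg_preimage_slitPlane ▸ isOpen_slitPlane.preimage continuous_neg

lemma isPreconnected_slitC : IsPreconnected slitC := by
  rw [← neg_preimage_slitPlane]
  exact ((Homeomorph.neg ℂ).isPreconnected_preimage).2
    (starConvex_one_slitPlane.isPathConnected one_mem_slitPlane).isConnected.isPreconnected

lemma eqOn_slitC_of_eventuallyEq {E : Type*} [NormedAddCommGroup E] [NormedSpace ℂ E]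
    [CompleteSpace E] {f g : ℂ → E} (hf : DifferentiableOn ℂ f slitC)
    (hg : DifferentiableOn ℂ g slitC) {z₀ : ℂ} (hz₀ : z₀ ∈ slitC) (hfg : f =ᶠ[nhds z₀] g) :
    EqOn f g slitC :=
  (hf.analyticOnNhd isOpen_slitC).eqOn_of_preconnected_of_eventuallyEq
    (hg.analyticOnNhd isOpen_slitC) isPreconnected_slitC hz₀ hfg

lemma Real.abs_arcsin (x : ℝ) : |Real.arcsin x| = Real.arcsin |x| := by
  rcases le_total 0 x with h | h
  · rw [abs_of_nonneg h, abs_of_nonneg (Real.arcsin_nonneg.2 h)]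
  · rw [abs_of_nonpos h, abs_of_nonpos (Real.arcsin_nonpos.2 h), Real.arcsin_neg]

lemma Complex.abs_arg_add_ofReal_le {v : ℂ} (hv : 0 ≤ v.re) {t : ℝ} (ht : 0 ≤ t) :
    |arg (v + t)| ≤ |arg v| := by
  rcases eq_or_ne v 0 with rfl | hv0
  · simp [arg_ofReal_of_nonneg ht]
  have hvt : 0 ≤ (v + t).re := by simp only [add_re, ofReal_re]; linarith
  have hnorm : ‖v‖ ≤ ‖v + t‖ := by
    rw [← sq_le_sq₀ (norm_nonneg _) (norm_nonneg _), Complex.sq_norm, Complex.sq_norm,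
      normSq_apply, normSq_apply]
    simp only [add_re, add_im, ofReal_re, ofReal_im, add_zero]
    nlinarith
  rw [arg_of_re_nonneg hv, arg_of_re_nonneg hvt, Real.abs_arcsin, Real.abs_arcsin]
  refine Real.arcsin_le_arcsin ?_
  rw [abs_div, abs_div, abs_norm, abs_norm, add_im, ofReal_im, add_zero]
  gcongr

section Dminus

variable {A δ : ℝ}

lemma mem_Dminus_iff (hδ : 0 < δ) {z : ℂ} : z ∈ Dminus A δ ↔ δ ≤ |arg (z + A)| := by
  refine ⟨And.right, fun h => ⟨fun hz => ?_, h⟩⟩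
  rw [hz, neg_add_cancel, arg_zero, abs_zero] at h
  exact h.not_gt hδ

lemma sub_one_mem_Dminus (hδ : 0 < δ) (hδ2 : δ ≤ Real.pi / 2) {z : ℂ} (hz : z ∈ Dminus A δ) :
    z - 1 ∈ Dminus A δ := by
  rw [mem_Dminus_iff hδ] at hz ⊢
  by_contra! h
  have hre : 0 ≤ (z - 1 + A).re := abs_arg_le_pi_div_two_iff.1 (h.le.trans hδ2)
  have := abs_arg_add_ofReal_le hre zero_le_one
  rw [ofReal_one, show z - 1 + A + 1 = z + A by ring] at this
  linarith

lemma halfPlane_subset_interior_Dminus (hδ2 : δ ≤ Real.pi / 2) :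
    {z : ℂ | z.re < -A} ⊆ interior (Dminus A δ) := by
  refine interior_maximal (fun z (hz : z.re < -A) => ⟨fun h => ?_, ?_⟩)
    (isOpen_lt continuous_re continuous_const)
  · simp [h] at hz
  · have hre : ¬ 0 ≤ (z + A).re := by rw [add_re, ofReal_re]; linarith
    linarith [not_le.1 (abs_arg_le_pi_div_two_iff.not.2 hre)]

end Dminus

section IterateExtension

variable {E : Type*} {f : E → E} {D : Set ℂ} {α : ℂ → E}

lemma sub_natCast_mem (hD : ∀ z ∈ D, z - 1 ∈ D) {z : ℂ} (hz : z ∈ D) (n : ℕ) : z - n ∈ D := by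
  induction n with
  | zero => simpa using hz
  | succ k ih => simpa [sub_sub] using hD _ ih

lemma iterate_apply_sub_natCast (hD : ∀ z ∈ D, z - 1 ∈ D)
    (hfα : ∀ τ ∈ D, τ + 1 ∈ D → f (α τ) = α (τ + 1)) {σ : ℂ} (hσ : σ ∈ D) (k : ℕ) :
    f^[k] (α (σ - k)) = α σ := by
  induction k with
  | zero => simp
  | succ k ih =>
    have hk : σ - (k + 1 : ℕ) + 1 = σ - k := by push_cast; ring
    rw [Function.iterate_succ_apply, hfα _ (sub_natCast_mem hD hσ _)
      (hk ▸ sub_natCast_mem hD hσ k), hk, ih]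

lemma iterate_apply_sub_natCast_eq (hD : ∀ z ∈ D, z - 1 ∈ D)
    (hfα : ∀ τ ∈ D, τ + 1 ∈ D → f (α τ) = α (τ + 1)) {τ : ℂ} {m n : ℕ}
    (hm : τ - m ∈ D) (hn : τ - n ∈ D) : f^[m] (α (τ - m)) = f^[n] (α (τ - n)) := by
  wlog hnm : n ≤ m generalizing m n
  · exact (this hn hm (le_of_not_ge hnm)).symm
  obtain ⟨k, rfl⟩ := Nat.exists_eq_add_of_le hnm
  rw [Function.iterate_add_apply, Nat.cast_add, ← sub_sub,
    iterate_apply_sub_natCast hD hfα hn]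

def stepsToHalfPlane (c : ℝ) (τ : ℂ) : ℕ := ⌈τ.re - c⌉₊ + 1

lemma re_sub_stepsToHalfPlane_lt (c : ℝ) (τ : ℂ) : (τ - stepsToHalfPlane c τ).re < c := by
  have := Nat.le_ceil (τ.re - c)
  simp only [stepsToHalfPlane, Nat.cast_add, Nat.cast_one, sub_re, add_re, natCast_re, one_re]
  linarith

def iterateExtension (f : E → E) (α : ℂ → E) (c : ℝ) (τ : ℂ) : E :=
  f^[stepsToHalfPlane c τ] (α (τ - stepsToHalfPlane c τ))

variable {c : ℝ}

lemma iterateExtension_eq (hD : ∀ z ∈ D, z - 1 ∈ D)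
    (hfα : ∀ τ ∈ D, τ + 1 ∈ D → f (α τ) = α (τ + 1)) (hH : {z : ℂ | z.re < c} ⊆ D)
    {τ : ℂ} {n : ℕ} (hn : τ - n ∈ D) : iterateExtension f α c τ = f^[n] (α (τ - n)) :=
  iterate_apply_sub_natCast_eq hD hfα (hH (re_sub_stepsToHalfPlane_lt c τ)) hn

lemma eqOn_iterateExtension (hD : ∀ z ∈ D, z - 1 ∈ D)
    (hfα : ∀ τ ∈ D, τ + 1 ∈ D → f (α τ) = α (τ + 1)) (hH : {z : ℂ | z.re < c} ⊆ D) :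
    EqOn (iterateExtension f α c) α D := fun τ hτ => by
  simpa using iterateExtension_eq (n := 0) hD hfα hH (by simpa using hτ)

lemma iterateExtension_add_one (hD : ∀ z ∈ D, z - 1 ∈ D)
    (hfα : ∀ τ ∈ D, τ + 1 ∈ D → f (α τ) = α (τ + 1)) (hH : {z : ℂ | z.re < c} ⊆ D) (τ : ℂ) :
    f (iterateExtension f α c τ) = iterateExtension f α c (τ + 1) := by
  have hτ : τ + 1 - (stepsToHalfPlane c τ + 1 : ℕ) = τ - stepsToHalfPlane c τ := by
    push_cast; ring
  rw [iterateExtension_eq hD hfα hH (τ := τ + 1) (n := stepsToHalfPlane c τ + 1)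
    (hτ ▸ hH (re_sub_stepsToHalfPlane_lt c τ)), hτ, Function.iterate_succ_apply']
  rfl

lemma differentiable_iterateExtension [NormedAddCommGroup E] [NormedSpace ℂ E]
    (hD : ∀ z ∈ D, z - 1 ∈ D) (hfα : ∀ τ ∈ D, τ + 1 ∈ D → f (α τ) = α (τ + 1))
    (hH : {z : ℂ | z.re < c} ⊆ D) (hf : Differentiable ℂ f)
    (hα : DifferentiableOn ℂ α {z : ℂ | z.re < c}) :
    Differentiable ℂ (iterateExtension f α c) := by
  intro τ₀
  set m := stepsToHalfPlane c τ₀ + 1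
  have hball : ∀ τ ∈ Metric.ball τ₀ 1, (τ - m).re < c := by
    intro τ hτ
    have hre := (abs_le.1 ((abs_re_le_norm (τ - τ₀)).trans (mem_ball_iff_norm.1 hτ).le)).2
    have := re_sub_stepsToHalfPlane_lt c τ₀
    simp only [m, Nat.cast_add, Nat.cast_one, sub_re, add_re, natCast_re, one_re] at hre this ⊢
    linarith
  have hEv : iterateExtension f α c =ᶠ[nhds τ₀] fun τ => f^[m] (α (τ - m)) :=
    Filter.eventually_of_mem (Metric.ball_mem_nhds τ₀ one_pos)
      fun τ hτ => iterateExtension_eq hD hfα hH (hH (hball τ hτ))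
  have hαm : DifferentiableAt ℂ α (τ₀ - m) :=
    hα.differentiableAt ((isOpen_lt continuous_re continuous_const).mem_nhds
      (hball τ₀ (Metric.mem_ball_self one_pos)))
  exact ((hf.iterate m).differentiableAt.comp τ₀
    (hαm.comp τ₀ (differentiableAt_id.sub_const _))).congr_of_eventuallyEq hEv

end IterateExtension

lemma differentiable_F0c : Differentiable ℂ F0c := by
  unfold F0c
  fun_prop

theorem separatrix_analytic_continuation_general (A δ : ℝ) (hA : 0 < A)
    (hδ : 0 < δ) (hδ2 : δ < Real.pi / 2) (α : ℂ → ℂ × ℂ)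
    (hd : DifferentiableOn ℂ α (interior (Dminus A δ)))
    (heq : ∀ τ : ℂ, τ ∈ Dminus A δ → τ + 1 ∈ Dminus A δ → F0c (α τ) = α (τ + 1)) :
    ∃ αt : ℂ → ℂ × ℂ,
      (DifferentiableOn ℂ αt slitC ∧
        Set.EqOn αt α (interior (Dminus A δ)) ∧
        ∀ τ : ℂ, τ ∈ slitC → τ + 1 ∈ slitC → F0c (αt τ) = αt (τ + 1)) ∧
      ∀ αt' : ℂ → ℂ × ℂ,
        (DifferentiableOn ℂ αt' slitC ∧
          Set.EqOn αt' α (interior (Dminus A δ)) ∧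
          ∀ τ : ℂ, τ ∈ slitC → τ + 1 ∈ slitC → F0c (αt' τ) = αt' (τ + 1)) →
        Set.EqOn αt αt' slitC := by
  have hD : ∀ z ∈ Dminus A δ, z - 1 ∈ Dminus A δ := fun z => sub_one_mem_Dminus hδ hδ2.le
  have hH : {z : ℂ | z.re < -A} ⊆ interior (Dminus A δ) := halfPlane_subset_interior_Dminus hδ2.le
  have hHD := hH.trans interior_subset
  have hdiff := differentiable_iterateExtension hD heq hHD differentiable_F0c (hd.mono hH)
  have hαt := (eqOn_iterateExtension hD heq hHD).mono interior_subset
  refine ⟨iterateExtension F0c α (-A),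
    ⟨hdiff.differentiableOn, hαt, fun τ _ _ => iterateExtension_add_one hD heq hHD τ⟩, ?_⟩
  rintro αt' ⟨hd', hα', -⟩
  have hre : (-(A : ℂ) - 1).re = -A - 1 := by simp
  have hz₀ : -(A : ℂ) - 1 ∈ interior (Dminus A δ) := hH (show _ < -A by rw [hre]; linarith)
  exact eqOn_slitC_of_eventuallyEq hdiff.differentiableOn hd' (Or.inr (by rw [hre]; linarith))
    (Filter.eventuallyEq_of_mem (isOpen_interior.mem_nhds hz₀) (hαt.trans hα'.symm))

/-- Unique analytic continuation of a separatrix of `F₀` from `D⁻_{A,δ}` to the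
slit plane `ℂ ∖ [0,∞)`, still satisfying `F₀(α̃(τ)) = α̃(τ+1)`. -/
theorem separatrix_analytic_continuation (A δ : ℝ) (hA : 0 < A)
    (hδ : 0 < δ) (hδ2 : δ < Real.pi / 2) (α : ℂ → ℂ × ℂ)
    (hc : ContinuousOn α (Dminus A δ))
    (hd : DifferentiableOn ℂ α (interior (Dminus A δ)))
    (heq : ∀ τ : ℂ, τ ∈ Dminus A δ → τ + 1 ∈ Dminus A δ → F0c (α τ) = α (τ + 1)) :
    ∃ αt : ℂ → ℂ × ℂ,
      (DifferentiableOn ℂ αt slitC ∧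
        Set.EqOn αt α (interior (Dminus A δ)) ∧
        ∀ τ : ℂ, τ ∈ slitC → τ + 1 ∈ slitC → F0c (αt τ) = αt (τ + 1)) ∧
      ∀ αt' : ℂ → ℂ × ℂ,
        (DifferentiableOn ℂ αt' slitC ∧
          Set.EqOn αt' α (interior (Dminus A δ)) ∧
          ∀ τ : ℂ, τ ∈ slitC → τ + 1 ∈ slitC → F0c (αt' τ) = αt' (τ + 1)) →
        Set.EqOn αt αt' slitC :=
  separatrix_analytic_continuation_general A δ hA hδ hδ2 α hd heq
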